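/- Key separation lemma: Let G be a graph, H an induced connected subgraph of finite adhesion, K the dominated torso of H in G, and S a tendril in G with K-projection S′ = (w_m). If F ⊆ V(K) separates U ⊆ V(H) from W = {w_m : m ∈ ℕ} in K, then the S-modification F_S separates U from the vertex set of S in G. -/

import Mathlib

/-- A ray in `G`: a one-way infinite path. -/
def IsRay {V : Type*} (G : SimpleGraph V) (f : ℕ → V) : Prop :=
  Function.Injective f ∧ ∀ n, G.Adj (f n) (f (n + 1))

/-- `F` separates `U` from `S` in `G`: every path (walk) from a vertex of `U`
to a vertex of `S` meets `F`. -/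
def Separates {V : Type*} (G : SimpleGraph V) (F U S : Set V) : Prop :=
  ∀ u ∈ U, ∀ s ∈ S, ∀ p : G.Walk u s, ∃ x ∈ p.support, x ∈ F

/-- `U` is dispersed in `G`: every ray can be separated from `U` by a finite vertex set. -/
def Dispersed {V : Type*} (G : SimpleGraph V) (U : Set V) : Prop :=
  ∀ f : ℕ → V, IsRay G f → ∃ F : Set V, F.Finite ∧ Separates G F U (Set.range f)

/-- `v` is reachable from `u` by a walk avoiding `H` entirely. -/
def ReachOutside {V : Type*} (G : SimpleGraph V) (H : Set V) (u v : V) : Prop :=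
  ∃ p : G.Walk u v, ∀ x ∈ p.support, x ∉ H

/-- `D` is a connected component of `G − H` (the induced subgraph on `V(G) \ H`). -/
def IsComp {V : Type*} (G : SimpleGraph V) (H D : Set V) : Prop :=
  D.Nonempty ∧ ∀ u ∈ D, ∀ v : V, (v ∈ D ↔ v ∉ H ∧ ReachOutside G H u v)

/-- The neighborhood `N_G(D)`: vertices outside `D` adjacent in `G` to a vertex of `D`. -/
def nbhdOf {V : Type*} (G : SimpleGraph V) (D : Set V) : Set V :=
  {v | v ∉ D ∧ ∃ d ∈ D, G.Adj v d}

/-- `H` has finite adhesion in `G`: every component of `G − H` has finite neighborhood. -/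
def FiniteAdhesion {V : Type*} (G : SimpleGraph V) (H : Set V) : Prop :=
  ∀ D : Set V, IsComp G H D → (nbhdOf G D).Finite

/-- The component of `G − H` containing `u` (for `u ∉ H`). -/
def compOf {V : Type*} (G : SimpleGraph V) (H : Set V) (u : V) : Set V :=
  {v | v ∉ H ∧ ReachOutside G H u v}

/-- `𝒟′`: components of `G − H` whose adhesion set is shared by only finitely
many components. -/
def Dfin {V : Type*} (G : SimpleGraph V) (H : Set V) : Set (Set V) :=
  {D | IsComp G H D ∧ {D' | IsComp G H D' ∧ nbhdOf G D' = nbhdOf G D}.Finite}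

/-- `𝒟″`: components of `G − H` whose adhesion set is shared by infinitely
many components. -/
def Dinf {V : Type*} (G : SimpleGraph V) (H : Set V) : Set (Set V) :=
  {D | IsComp G H D ∧ ¬ {D' | IsComp G H D' ∧ nbhdOf G D' = nbhdOf G D}.Finite}

/-- `η` is an admissible contraction map: each `D ∈ 𝒟″` is contracted onto a vertex
`η D ∈ N_G(D)`, and for every `D ∈ 𝒟″` the map `η` restricted to the components
sharing the adhesion set `N_G(D)` surjects onto `N_G(D)`. -/
def EtaOK {V : Type*} (G : SimpleGraph V) (H : Set V) (η : Set V → V) : Prop :=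
  (∀ D ∈ Dinf G H, η D ∈ nbhdOf G D) ∧
  (∀ D ∈ Dinf G H, ∀ a ∈ nbhdOf G D,
    ∃ D' ∈ Dinf G H, nbhdOf G D' = nbhdOf G D ∧ η D' = a)

open Classical in
/-- The contraction map `ρ` onto the vertex set of the dominated torso:
vertices of `H` are kept, each `D ∈ 𝒟′` is contracted to the new vertex
`Sum.inr D`, and each `D ∈ 𝒟″` is contracted onto `η D ∈ N_G(D)`. -/
noncomputable def rho {V : Type*} (G : SimpleGraph V) (H : Set V) (η : Set V → V) :
    V → V ⊕ Set V := fun u =>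
  if u ∈ H then Sum.inl u
  else if compOf G H u ∈ Dfin G H then Sum.inr (compOf G H u)
  else Sum.inl (η (compOf G H u))

/-- The dominated torso `K` of `H` in `G`: the contraction minor of `G`
witnessed by `ρ`. -/
noncomputable def Torso {V : Type*} (G : SimpleGraph V) (H : Set V) (η : Set V → V) :
    SimpleGraph (V ⊕ Set V) where
  Adj a b := a ≠ b ∧ ∃ u v : V, rho G H η u = a ∧ rho G H η v = b ∧ G.Adj u v
  symm := by
    constructor
    rintro a b ⟨hne, u, v, hu, hv, huv⟩
    exact ⟨hne.symm, v, u, hv, hu, huv.symm⟩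
  loopless := by constructor; rintro a ⟨hne, -⟩; exact hne rfl

/-- The vertex set of the dominated torso. -/
def torsoVerts {V : Type*} (G : SimpleGraph V) (H : Set V) : Set (V ⊕ Set V) :=
  Sum.inl '' H ∪ Sum.inr '' Dfin G H

/-- A tendril in `G`: a ray with infinitely many vertices in `H`. -/
def IsTendril {V : Type*} (G : SimpleGraph V) (H : Set V) (f : ℕ → V) : Prop :=
  IsRay G f ∧ {n | f n ∈ H}.Infinite

open Classical in
/-- The `H`-masking of a sequence: vertices outside `H` are replaced by their
component of `G − H`. -/
noncomputable def mask {V : Type*} (G : SimpleGraph V) (H : Set V) : V → V ⊕ Set V :=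
  fun u => if u ∈ H then Sum.inl u else Sum.inr (compOf G H u)

/-- The indices of a ray kept by the `K`-projection: vertices of `H`, and the
first index of each maximal run of a component `D ∈ 𝒟′`. -/
def keepIdx {V : Type*} (G : SimpleGraph V) (H : Set V) (f : ℕ → V) (n : ℕ) : Prop :=
  f n ∈ H ∨
    (f n ∉ H ∧ compOf G H (f n) ∈ Dfin G H ∧
      (n = 0 ∨ mask G H (f (n - 1)) ≠ mask G H (f n)))

/-- The `K`-projection of a tendril: maximal runs of a component `D ∈ 𝒟′` are
replaced by the single vertex `v_D`, and terms in components of `𝒟″` are removed. -/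
noncomputable def rayProj {V : Type*} (G : SimpleGraph V) (H : Set V) (η : Set V → V)
    (f : ℕ → V) : ℕ → V ⊕ Set V :=
  fun m => rho G H η (f (Nat.nth (keepIdx G H f) m))

/-- `D̂′`: components of `𝒟′` whose contracted vertex lies in `F`. -/
def DhatFin {V : Type*} (G : SimpleGraph V) (H : Set V) (F : Set (V ⊕ Set V)) :
    Set (Set V) :=
  {D | D ∈ Dfin G H ∧ Sum.inr D ∈ F}

/-- `D̂″`: components `D ∈ 𝒟″` such that some term of the `H`-masking of the
tendril equals `D` and the next vertex of the tendril lies in `F`. -/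
def DhatInf {V : Type*} (G : SimpleGraph V) (H : Set V) (f : ℕ → V)
    (F : Set (V ⊕ Set V)) : Set (Set V) :=
  {D | D ∈ Dinf G H ∧ ∃ n : ℕ, f n ∉ H ∧ compOf G H (f n) = D ∧ Sum.inl (f (n + 1)) ∈ F}

/-- The `S`-modification `F_S` of a set `F ⊆ V(K)`. -/
def Smod {V : Type*} (G : SimpleGraph V) (H : Set V) (f : ℕ → V)
    (F : Set (V ⊕ Set V)) : Set V :=
  (Sum.inl ⁻¹' F ∩ H) ∪ ⋃ D ∈ DhatFin G H F ∪ DhatInf G H f F, nbhdOf G D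

/-!
Suppose a walk `P` in `G` from `U` to the tendril `S` avoids `F_S`. Along `P` we track a vertex of
`K - F` reachable from `U` that stands for the current vertex of `P`: the vertex itself if it lies
in `H`, the contracted vertex `v_D` if it lies in some `D ∈ 𝒟′`, and, inside a component
`D ∈ 𝒟″` (which has no vertex of its own in `K`), a vertex of `N(D)` outside `F_S`. This survives
every step of `P`, because `F_S` contains `N(D)` for every `D ∈ D̂′` and because `N(D)` is a clique
of `K` for `D ∈ 𝒟″`. At the end of `P` the tracked vertex is joined in `K - F` to a vertex of the
`K`-projection `S′`; for `D ∈ 𝒟″` this is the vertex of `H` through which `S` leaves `D`, which is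
not in `F` since `D ∉ D̂″`. This contradicts the separation of `U` from `S′` in `K`.
-/

open SimpleGraph

section Avoiding

variable {W : Type*} {K : SimpleGraph W} {F : Set W}

/-- `K - F`, with the vertices of `F` kept as isolated vertices. -/
def SimpleGraph.avoiding (K : SimpleGraph W) (F : Set W) : SimpleGraph W where
  Adj a b := K.Adj a b ∧ a ∉ F ∧ b ∉ F
  symm := ⟨fun _ _ h => ⟨h.1.symm, h.2.2, h.2.1⟩⟩
  loopless := ⟨fun _ h => h.1.ne rfl⟩

@[simp]
lemma SimpleGraph.avoiding_adj {a b : W} :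
    (K.avoiding F).Adj a b ↔ K.Adj a b ∧ a ∉ F ∧ b ∉ F :=
  Iff.rfl

lemma SimpleGraph.Adj.reachable_avoiding {a b : W} (h : K.Adj a b) (ha : a ∉ F) (hb : b ∉ F) :
    (K.avoiding F).Reachable a b :=
  Adj.reachable (avoiding_adj.mpr ⟨h, ha, hb⟩)

lemma SimpleGraph.avoiding_le : K.avoiding F ≤ K := fun _ _ h => (avoiding_adj.mp h).1

lemma SimpleGraph.Walk.notMem_of_mem_support_avoiding {a b : W} (p : (K.avoiding F).Walk a b)
    (ha : a ∉ F) : ∀ z ∈ p.support, z ∉ F := by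
  induction p with
  | nil => simpa using ha
  | cons h p ih =>
    intro z hz
    rcases List.mem_cons.mp hz with rfl | hz
    · exact ha
    · exact ih (avoiding_adj.mp h).2.2 z hz

lemma Separates.not_reachable_avoiding {A B : Set W} (h : Separates K F A B) {a b : W}
    (ha : a ∈ A) (haF : a ∉ F) (hb : b ∈ B) : ¬ (K.avoiding F).Reachable a b := by
  rintro ⟨p⟩
  obtain ⟨z, hz, hzF⟩ := h a ha b hb (p.mapLe avoiding_le)
  rw [Walk.support_mapLe_eq_support] at hz
  exact p.notMem_of_mem_support_avoiding haF z hz hzF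

end Avoiding

section Components

variable {V : Type*} {G : SimpleGraph V} {H : Set V} {u v w : V} {D : Set V}

lemma ReachOutside.symm (h : ReachOutside G H u v) : ReachOutside G H v u := by
  obtain ⟨p, hp⟩ := h
  exact ⟨p.reverse, fun x hx => hp x (by simpa using hx)⟩

lemma ReachOutside.trans (h₁ : ReachOutside G H u v) (h₂ : ReachOutside G H v w) :
    ReachOutside G H u w := by
  obtain ⟨p, hp⟩ := h₁
  obtain ⟨q, hq⟩ := h₂
  refine ⟨p.append q, fun x hx => ?_⟩
  rcases (Walk.mem_support_append_iff _ _).mp hx with h | h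
  · exact hp x h
  · exact hq x h

lemma mem_compOf_self (hu : u ∉ H) : u ∈ compOf G H u :=
  ⟨hu, Walk.nil, by simpa using hu⟩

lemma compOf_eq_of_mem (hv : v ∈ compOf G H u) : compOf G H v = compOf G H u := by
  ext w
  exact ⟨fun hw => ⟨hw.1, hv.2.trans hw.2⟩, fun hw => ⟨hw.1, hv.2.symm.trans hw.2⟩⟩

lemma compOf_eq_of_adj (hu : u ∉ H) (hw : w ∉ H) (h : G.Adj u w) :
    compOf G H u = compOf G H w := by
  refine compOf_eq_of_mem ⟨hu, Walk.cons h.symm Walk.nil, fun x hx => ?_⟩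
  rcases (by simpa using hx : x = w ∨ x = u) with rfl | rfl <;> assumption

lemma isComp_compOf (hu : u ∉ H) : IsComp G H (compOf G H u) :=
  ⟨⟨u, mem_compOf_self hu⟩, fun a ha v => by rw [← compOf_eq_of_mem ha]; rfl⟩

lemma IsComp.compOf_eq (hD : IsComp G H D) (hu : u ∈ D) : compOf G H u = D := by
  ext v
  rw [hD.2 u hu v]
  rfl

lemma IsComp.notMem (hD : IsComp G H D) (hu : u ∈ D) : u ∉ H :=
  ((hD.2 u hu u).mp hu).1

lemma IsComp.nbhdOf_subset (hD : IsComp G H D) : nbhdOf G D ⊆ H := by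
  rintro a ⟨haD, d, hd, had⟩
  by_contra haH
  rw [← hD.compOf_eq hd, ← compOf_eq_of_adj haH (hD.notMem hd) had] at haD
  exact haD (mem_compOf_self haH)

lemma mem_nbhdOf_compOf (hu : u ∈ H) (hw : w ∉ H) (h : G.Adj u w) :
    u ∈ nbhdOf G (compOf G H w) :=
  ⟨fun hu' => hu'.1 hu, w, mem_compOf_self hw, h⟩

lemma notMem_Dfin_of_mem_Dinf (h : D ∈ Dinf G H) : D ∉ Dfin G H := fun h' => h.2 h'.2

lemma compOf_mem_Dfin_or_mem_Dinf (hu : u ∉ H) :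
    compOf G H u ∈ Dfin G H ∨ compOf G H u ∈ Dinf G H := by
  by_cases hfin : {D' | IsComp G H D' ∧ nbhdOf G D' = nbhdOf G (compOf G H u)}.Finite
  · exact Or.inl ⟨isComp_compOf hu, hfin⟩
  · exact Or.inr ⟨isComp_compOf hu, hfin⟩

lemma mask_eq_inr_iff : mask G H u = Sum.inr D ↔ u ∉ H ∧ compOf G H u = D := by
  unfold mask
  split_ifs with hu <;> simp [hu]

end Components

section Torso

variable {V : Type*} {G : SimpleGraph V} {H : Set V} {η : Set V → V} {u : V} {D : Set V}

lemma rho_of_mem (hu : u ∈ H) : rho G H η u = Sum.inl u := by simp [rho, hu]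

lemma rho_of_mem_Dfin (hu : u ∉ H) (hD : compOf G H u ∈ Dfin G H) :
    rho G H η u = Sum.inr (compOf G H u) := by
  simp [rho, hu, hD]

lemma rho_of_mem_Dinf (hu : u ∉ H) (hD : compOf G H u ∈ Dinf G H) :
    rho G H η u = Sum.inl (η (compOf G H u)) := by
  simp [rho, hu, notMem_Dfin_of_mem_Dinf hD]

/-- Some `D'` with the same adhesion set as `D` is contracted onto `b`, and `a` has a neighbour
in `D'`. -/
lemma torso_adj_of_mem_nbhdOf (hη : EtaOK G H η) (hD : D ∈ Dinf G H) {a b : V}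
    (ha : a ∈ nbhdOf G D) (hb : b ∈ nbhdOf G D) (hab : a ≠ b) :
    (Torso G H η).Adj (Sum.inl a) (Sum.inl b) := by
  obtain ⟨D', hD', hN, hηD'⟩ := hη.2 D hD b hb
  obtain ⟨-, d, hd, had⟩ : a ∈ nbhdOf G D' := hN ▸ ha
  have hdD' : compOf G H d = D' := hD'.1.compOf_eq hd
  refine ⟨fun h => hab (Sum.inl.inj h), a, d, rho_of_mem (hD.1.nbhdOf_subset ha), ?_, had⟩
  rw [rho_of_mem_Dinf (hD'.1.notMem hd) (hdD' ▸ hD'), hdD', hηD']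

lemma reachable_avoiding_of_mem_nbhdOf (hη : EtaOK G H η) (hD : D ∈ Dinf G H)
    {F : Set (V ⊕ Set V)} {a b : V} (ha : a ∈ nbhdOf G D) (hb : b ∈ nbhdOf G D)
    (haF : Sum.inl a ∉ F) (hbF : Sum.inl b ∉ F) :
    ((Torso G H η).avoiding F).Reachable (Sum.inl a) (Sum.inl b) := by
  rcases eq_or_ne a b with rfl | hab
  · rfl
  · exact (torso_adj_of_mem_nbhdOf hη hD ha hb hab).reachable_avoiding haF hbF

end Torso

section Projection

variable {V : Type*} {G : SimpleGraph V} {H : Set V} {η : Set V → V} {f : ℕ → V}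

lemma rho_mem_range_rayProj_of_keepIdx {k : ℕ} (hk : keepIdx G H f k) :
    rho G H η (f k) ∈ Set.range (rayProj G H η f) := by
  classical
  exact ⟨Nat.count (keepIdx G H f) k, by rw [rayProj, Nat.nth_count hk]⟩

/-- A vertex of a run inside `D ∈ 𝒟′` is represented in `S′` by the first vertex of its run. -/
lemma rho_mem_range_rayProj {n : ℕ} (hn : f n ∈ H ∨ compOf G H (f n) ∈ Dfin G H) :
    rho G H η (f n) ∈ Set.range (rayProj G H η f) := by
  induction n with
  | zero =>
    by_cases h0 : f 0 ∈ H
    · exact rho_mem_range_rayProj_of_keepIdx (Or.inl h0)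
    · exact rho_mem_range_rayProj_of_keepIdx (Or.inr ⟨h0, hn.resolve_left h0, Or.inl rfl⟩)
  | succ n ih =>
    by_cases hH : f (n + 1) ∈ H
    · exact rho_mem_range_rayProj_of_keepIdx (Or.inl hH)
    have hD := hn.resolve_left hH
    by_cases hrun : mask G H (f n) = mask G H (f (n + 1))
    · obtain ⟨hn', hc⟩ := mask_eq_inr_iff.mp (hrun.trans (mask_eq_inr_iff.mpr ⟨hH, rfl⟩))
      rw [rho_of_mem_Dfin hH hD, ← hc, ← rho_of_mem_Dfin hn' (hc ▸ hD)]
      exact ih (Or.inr (hc ▸ hD))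
    · exact rho_mem_range_rayProj_of_keepIdx (Or.inr ⟨hH, hD, Or.inr hrun⟩)

lemma IsTendril.exists_exit (hf : IsTendril G H f) {n : ℕ} (hn : f n ∉ H) :
    ∃ j, f j ∉ H ∧ compOf G H (f j) = compOf G H (f n) ∧ f (j + 1) ∈ H := by
  obtain ⟨m, hm, hnm⟩ := hf.2.exists_gt n
  obtain ⟨d, rfl⟩ : ∃ d, m = n + d + 1 := ⟨m - n - 1, by omega⟩
  clear hnm
  induction d generalizing n with
  | zero => exact ⟨n, hn, rfl, hm⟩
  | succ d ih =>
    by_cases h1 : f (n + 1) ∈ H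
    · exact ⟨n, hn, rfl, h1⟩
    obtain ⟨j, hj, hjc, hj1⟩ := ih h1 (by rwa [show n + 1 + d + 1 = n + (d + 1) + 1 by omega])
    exact ⟨j, hj, hjc.trans (compOf_eq_of_adj h1 hn (hf.1.2 n).symm), hj1⟩

end Projection

section Tracking

variable {V : Type*} {G : SimpleGraph V} {H : Set V} {η : Set V → V} {f : ℕ → V}
  {F : Set (V ⊕ Set V)} {t₀ : V ⊕ Set V} {x w : V} {D : Set V}

lemma nbhdOf_subset_Smod (hD : D ∈ DhatFin G H F ∪ DhatInf G H f F) :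
    nbhdOf G D ⊆ Smod G H f F :=
  fun _ ha => Or.inr (Set.mem_biUnion hD ha)

lemma inl_notMem_of_notMem_Smod (hx : x ∈ H) (hxS : x ∉ Smod G H f F) : Sum.inl x ∉ F :=
  fun h => hxS (Or.inl ⟨h, hx⟩)

lemma inr_notMem_of_notMem_Smod (hD : D ∈ Dfin G H) (hx : x ∈ nbhdOf G D)
    (hxS : x ∉ Smod G H f F) : Sum.inr D ∉ F :=
  fun h => hxS (nbhdOf_subset_Smod (Or.inl ⟨hD, h⟩) hx)

variable (G H η f F) in
def SeenFrom (t₀ : V ⊕ Set V) (x : V) : Prop :=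
  (x ∈ H ∧ ((Torso G H η).avoiding F).Reachable t₀ (Sum.inl x)) ∨
  (x ∉ H ∧ compOf G H x ∈ Dfin G H ∧
    ((Torso G H η).avoiding F).Reachable t₀ (Sum.inr (compOf G H x))) ∨
  (x ∉ H ∧ compOf G H x ∈ Dinf G H ∧ ∃ a ∈ nbhdOf G (compOf G H x),
    a ∉ Smod G H f F ∧ ((Torso G H η).avoiding F).Reachable t₀ (Sum.inl a))

lemma SeenFrom.reachable_of_mem (hs : SeenFrom G H η f F t₀ x) (hx : x ∈ H) :
    ((Torso G H η).avoiding F).Reachable t₀ (Sum.inl x) := by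
  simpa [SeenFrom, hx] using hs

lemma SeenFrom.of_compOf_eq (hs : SeenFrom G H η f F t₀ x) (hx : x ∉ H) (hw : w ∉ H)
    (hc : compOf G H x = compOf G H w) : SeenFrom G H η f F t₀ w := by
  unfold SeenFrom at hs ⊢
  rw [← hc]
  simpa [hx, hw] using hs

lemma SeenFrom.of_adj_of_mem (hs : SeenFrom G H η f F t₀ x) (hxw : G.Adj x w) (hx : x ∈ H)
    (hw : w ∉ H) (hxS : x ∉ Smod G H f F) : SeenFrom G H η f F t₀ w := by
  have hR := hs.reachable_of_mem hx
  have hxN := mem_nbhdOf_compOf hx hw hxw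
  rcases compOf_mem_Dfin_or_mem_Dinf hw with hD | hD
  · refine Or.inr (Or.inl ⟨hw, hD, hR.trans (Adj.reachable_avoiding ?_ ?_ ?_)⟩)
    · exact ⟨by simp, x, w, rho_of_mem hx, rho_of_mem_Dfin hw hD, hxw⟩
    · exact inl_notMem_of_notMem_Smod hx hxS
    · exact inr_notMem_of_notMem_Smod hD hxN hxS
  · exact Or.inr (Or.inr ⟨hw, hD, x, hxN, hxS, hR⟩)

lemma SeenFrom.of_adj_of_notMem (hη : EtaOK G H η) (hs : SeenFrom G H η f F t₀ x)
    (hxw : G.Adj x w) (hx : x ∉ H) (hw : w ∈ H) (hwS : w ∉ Smod G H f F) :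
    SeenFrom G H η f F t₀ w := by
  have hwN := mem_nbhdOf_compOf hw hx hxw.symm
  have hwF := inl_notMem_of_notMem_Smod hw hwS
  refine Or.inl ⟨hw, ?_⟩
  rcases hs with ⟨hx', -⟩ | ⟨-, hD, hR⟩ | ⟨-, hD, a, haN, haS, hR⟩
  · exact absurd hx' hx
  · refine hR.trans (Adj.reachable_avoiding ?_ (inr_notMem_of_notMem_Smod hD hwN hwS) hwF)
    exact ⟨by simp, x, w, rho_of_mem_Dfin hx hD, rho_of_mem hw, hxw⟩
  · have haF := inl_notMem_of_notMem_Smod (hD.1.nbhdOf_subset haN) haS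
    exact hR.trans (reachable_avoiding_of_mem_nbhdOf hη hD haN hwN haF hwF)

lemma SeenFrom.of_adj (hη : EtaOK G H η) (hs : SeenFrom G H η f F t₀ x) (hxw : G.Adj x w)
    (hxS : x ∉ Smod G H f F) (hwS : w ∉ Smod G H f F) : SeenFrom G H η f F t₀ w := by
  by_cases hx : x ∈ H <;> by_cases hw : w ∈ H
  · refine Or.inl ⟨hw, (hs.reachable_of_mem hx).trans (Adj.reachable_avoiding ?_ ?_ ?_)⟩
    · exact ⟨by simpa using hxw.ne, x, w, rho_of_mem hx, rho_of_mem hw, hxw⟩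
    · exact inl_notMem_of_notMem_Smod hx hxS
    · exact inl_notMem_of_notMem_Smod hw hwS
  · exact hs.of_adj_of_mem hxw hx hw hxS
  · exact hs.of_adj_of_notMem hη hxw hx hw hwS
  · exact hs.of_compOf_eq hx hw (compOf_eq_of_adj hx hw hxw)

lemma SeenFrom.of_walk (hη : EtaOK G H η) {y : V} (p : G.Walk x y)
    (hp : ∀ z ∈ p.support, z ∉ Smod G H f F) (hs : SeenFrom G H η f F t₀ x) :
    SeenFrom G H η f F t₀ y := by
  induction p with
  | nil => exact hs
  | cons h p ih =>
    exact ih (fun z hz => hp z (by simp [hz])) (hs.of_adj hη h (hp _ (by simp)) (hp _ (by simp)))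

lemma SeenFrom.exists_mem_range_rayProj (hf : IsTendril G H f) (hη : EtaOK G H η) {n : ℕ}
    (hs : SeenFrom G H η f F t₀ (f n)) :
    ∃ t ∈ Set.range (rayProj G H η f), ((Torso G H η).avoiding F).Reachable t₀ t := by
  rcases hs with ⟨hn, hR⟩ | ⟨hn, hD, hR⟩ | ⟨hn, hD, a, haN, haS, hR⟩
  · exact ⟨_, rho_mem_range_rayProj (Or.inl hn), by rwa [rho_of_mem hn]⟩
  · exact ⟨_, rho_mem_range_rayProj (Or.inr hD), by rwa [rho_of_mem_Dfin hn hD]⟩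
  · obtain ⟨j, hj, hjc, hj1⟩ := hf.exists_exit hn
    have hbN : f (j + 1) ∈ nbhdOf G (compOf G H (f n)) :=
      hjc ▸ mem_nbhdOf_compOf hj1 hj (hf.1.2 j).symm
    have hbF : Sum.inl (f (j + 1)) ∉ F :=
      fun h => haS (nbhdOf_subset_Smod (Or.inr ⟨hD, j, hj, hjc, h⟩) haN)
    have haF := inl_notMem_of_notMem_Smod (hD.1.nbhdOf_subset haN) haS
    refine ⟨_, rho_mem_range_rayProj (Or.inl hj1), ?_⟩
    rw [rho_of_mem hj1]
    exact hR.trans (reachable_avoiding_of_mem_nbhdOf hη hD haN hbN haF hbF)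

end Tracking

theorem smod_separates_general {V : Type*} (G : SimpleGraph V) (H : Set V) (η : Set V → V)
    (hη : EtaOK G H η)
    (f : ℕ → V) (hf : IsTendril G H f)
    (U : Set V) (hUH : U ⊆ H)
    (F : Set (V ⊕ Set V))
    (hsep : Separates (Torso G H η) F (Sum.inl '' U) (Set.range (rayProj G H η f))) :
    Separates G (Smod G H f F) U (Set.range f) := by
  rintro u hu _ ⟨n, rfl⟩ p
  by_contra! hp
  have huF : Sum.inl u ∉ F := inl_notMem_of_notMem_Smod (hUH hu) (hp u p.start_mem_support)
  have hs : SeenFrom G H η f F (Sum.inl u) (f n) :=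
    SeenFrom.of_walk hη p hp (Or.inl ⟨hUH hu, .refl _⟩)
  obtain ⟨t, ht, hreach⟩ := hs.exists_mem_range_rayProj hf hη
  exact hsep.not_reachable_avoiding ⟨u, hu, rfl⟩ huF ht hreach

/-- Key separation lemma: if `F ⊆ V(K)` separates `U ⊆ V(H)` from the vertex set
of the `K`-projection `S′` of a tendril `S` in the dominated torso `K`, then the
`S`-modification `F_S` separates `U` from the vertex set of `S` in `G`. -/
theorem smod_separates {V : Type*} (G : SimpleGraph V) (H : Set V) (η : Set V → V)
    (hHconn : (G.induce H).Connected)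
    (hadh : FiniteAdhesion G H) (hη : EtaOK G H η)
    (f : ℕ → V) (hf : IsTendril G H f)
    (U : Set V) (hUH : U ⊆ H)
    (F : Set (V ⊕ Set V)) (hFK : F ⊆ torsoVerts G H)
    (hsep : Separates (Torso G H η) F (Sum.inl '' U) (Set.range (rayProj G H η f))) :
    Separates G (Smod G H f F) U (Set.range f) :=
  smod_separates_general G H η hη f hf U hUH F hsep
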